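/- arXiv:math/0210006 — 2 statements merged into one kernel-verified Lean document; each statement's English description precedes it below -/
import Mathlib

section
/- The Serre diagonal on the cellular chain complex of the standard n-cube is strictly coassociative: (Δ⊗id)∘Δ = (id⊗Δ)∘Δ as maps Q_* → Q_* ⊗ Q_* ⊗ Q_*. -/
/-!
The cellular chain complex of the standard `n`-cube and its Serre diagonal.

A face of the `n`-cube is encoded as a function `c : Fin n → Option Bool`,
with `some false` = the value `0`, `some true` = the value `1` and `none` = `∗`
(a free coordinate).  `Q n` is the free `ℤ`-module on the set of all faces
(the direct sum of all the graded pieces `Q_k`).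
-/

open TensorProduct

/-- A face of the standard `n`-cube: value `some false` is `0`, `some true`
is `1`, `none` is `∗` (a free coordinate). -/
abbrev CubeFace (n : ℕ) : Type := Fin n → Option Bool

/-- The set of free coordinates of a face. -/
def freeSet {n : ℕ} (c : CubeFace n) : Finset (Fin n) :=
  Finset.univ.filter fun i => c i = none

/-- The free `ℤ`-module on the faces of the `n`-cube (the total cellular
chain module `⊕ₖ Q_k`). -/
abbrev Q (n : ℕ) : Type := CubeFace n →₀ ℤ

/-- Reassign the value `b` to all coordinates of `c` lying in `S`. -/
def setTo {n : ℕ} (c : CubeFace n) (S : Finset (Fin n)) (b : Bool) : CubeFace n :=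
  fun i => if i ∈ S then some b else c i

/-- The shuffle sign exponent `s(I,J) = #{(i,j) ∈ I × J : j < i}`. -/
def shufExp {n : ℕ} (I J : Finset (Fin n)) : ℕ :=
  ((I ×ˢ J).filter fun p => p.2 < p.1).card

/-- The Serre diagonal
`Δc = Σ_{I ⊔ J = free(c)} (−1)^{s(I,J)} c[J↦0] ⊗ c[I↦1]`. -/
noncomputable def serreDiag (n : ℕ) : Q n →ₗ[ℤ] Q n ⊗[ℤ] Q n :=
  (Finsupp.lift (Q n ⊗[ℤ] Q n) ℤ (CubeFace n)) fun c =>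
    ∑ I ∈ (freeSet c).powerset,
      ((-1 : ℤ) ^ shufExp I (freeSet c \ I)) •
        (Finsupp.single (setTo c (freeSet c \ I) false) (1 : ℤ) ⊗ₜ[ℤ]
          Finsupp.single (setTo c I true) (1 : ℤ))

lemma setTo_setTo_same {n} (c : CubeFace n) (S T : Finset (Fin n)) (b : Bool) :
    setTo (setTo c S b) T b = setTo c (S ∪ T) b := by
  funext i; simp only [setTo, Finset.mem_union]
  by_cases hT : i ∈ T <;> by_cases hS : i ∈ S <;> simp [hT, hS]

lemma setTo_comm {n} (c : CubeFace n) {S T : Finset (Fin n)} (h : Disjoint S T) (b b' : Bool) :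
    setTo (setTo c S b) T b' = setTo (setTo c T b') S b := by
  funext i; simp only [setTo]
  by_cases hT : i ∈ T <;> by_cases hS : i ∈ S <;> simp [hT, hS]
  exact absurd (Finset.disjoint_left.1 h hS) (fun h => h hT)

lemma freeSet_setTo {n} (c : CubeFace n) (S : Finset (Fin n)) (b : Bool) :
    freeSet (setTo c S b) = freeSet c \ S := by
  ext i; simp only [freeSet, setTo, Finset.mem_filter, Finset.mem_sdiff, Finset.mem_univ,
    true_and]
  by_cases h : i ∈ S <;> erw [Finset.mem_filter] <;> simp [h]

lemma shufExp_union_left {n} {A B : Finset (Fin n)} (C : Finset (Fin n)) (h : Disjoint A B) :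
    shufExp (A ∪ B) C = shufExp A C + shufExp B C := by
  unfold shufExp
  rw [Finset.union_product, Finset.filter_union, Finset.card_union_of_disjoint]
  exact Finset.disjoint_filter_filter (Finset.disjoint_product.2 (Or.inl h))

lemma shufExp_union_right {n} (A : Finset (Fin n)) {B C : Finset (Fin n)} (h : Disjoint B C) :
    shufExp A (B ∪ C) = shufExp A B + shufExp A C := by
  unfold shufExp
  rw [Finset.product_union, Finset.filter_union, Finset.card_union_of_disjoint]
  exact Finset.disjoint_filter_filter (Finset.disjoint_product.2 (Or.inr h))

lemma serreDiag_single {n} (c : CubeFace n) :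
    serreDiag n (Finsupp.single c 1) =
      ∑ I ∈ (freeSet c).powerset,
        ((-1 : ℤ) ^ shufExp I (freeSet c \ I)) •
          (Finsupp.single (setTo c (freeSet c \ I) false) (1 : ℤ) ⊗ₜ[ℤ]
            Finsupp.single (setTo c I true) (1 : ℤ)) := by
  simp [serreDiag]

section
attribute [local instance 2000] TensorProduct.instModule
lemma coassoc_aux (n : ℕ) (D : Q n →ₗ[ℤ] Q n ⊗[ℤ] Q n) (hD : ∀ c : CubeFace n, D (Finsupp.single c 1) =
        ∑ I ∈ (freeSet c).powerset,
          ((-1 : ℤ) ^ shufExp I (freeSet c \ I)) •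
            (Finsupp.single (setTo c (freeSet c \ I) false) (1 : ℤ) ⊗ₜ[ℤ]
              Finsupp.single (setTo c I true) (1 : ℤ))) :
    (TensorProduct.assoc ℤ (Q n) (Q n) (Q n)).toLinearMap.comp
        ((TensorProduct.map D LinearMap.id).comp D) =
      (TensorProduct.map LinearMap.id D).comp D := by
  apply Finsupp.lhom_ext'
  intro c
  apply LinearMap.ext_ring
  simp only [LinearMap.comp_apply, Finsupp.lsingle_apply, hD, map_sum,
    LinearMap.map_smul, TensorProduct.map_tmul, LinearMap.id_apply, hD,
    TensorProduct.sum_tmul, TensorProduct.tmul_sum, TensorProduct.smul_tmul,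
    Finset.smul_sum, LinearEquiv.coe_coe, TensorProduct.assoc_tmul, TensorProduct.tmul_smul, smul_smul,
    freeSet_setTo, sdiff_sdiff_right_self, Finset.inf_eq_inter, ← pow_add]
  rw [Finset.sum_sigma', Finset.sum_sigma']
  refine Finset.sum_nbij' (fun p => ⟨p.2, p.1 \ p.2⟩) (fun p => ⟨p.1 ∪ p.2, p.1⟩)
    ?_ ?_ ?_ ?_ ?_
  · rintro ⟨I, I'⟩ hp
    simp only [Finset.mem_sigma, Finset.mem_powerset] at hp ⊢
    obtain ⟨hIF, hI'⟩ := hp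
    have hI'I : I' ⊆ I := hI'.trans Finset.inter_subset_right
    exact ⟨hI'I.trans hIF, Finset.sdiff_subset_sdiff hIF (le_refl I')⟩
  · rintro ⟨A, B⟩ hp
    simp only [Finset.mem_sigma, Finset.mem_powerset] at hp ⊢
    obtain ⟨hAF, hB⟩ := hp
    refine ⟨Finset.union_subset hAF (hB.trans Finset.sdiff_subset), ?_⟩
    exact Finset.subset_inter hAF Finset.subset_union_left
  · rintro ⟨I, I'⟩ hp
    simp only [Finset.mem_sigma, Finset.mem_powerset] at hp
    have hI'I : I' ⊆ I := hp.2.trans Finset.inter_subset_right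
    simp [Finset.union_sdiff_of_subset hI'I]
  · rintro ⟨A, B⟩ hp
    simp only [Finset.mem_sigma, Finset.mem_powerset] at hp
    have hd : Disjoint A B := Finset.disjoint_of_subset_right hp.2 Finset.disjoint_sdiff
    simp [Finset.union_sdiff_cancel_left hd]
  · rintro ⟨I, I'⟩ hp
    simp only [Finset.mem_sigma, Finset.mem_powerset] at hp
    obtain ⟨hIF, hI'⟩ := hp
    have hI'I : I' ⊆ I := hI'.trans Finset.inter_subset_right
    have hFI : freeSet c ∩ I = I := Finset.inter_eq_right.2 hIF
    have hdis1 : Disjoint (freeSet c \ I) (I \ I') :=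
      Finset.disjoint_of_subset_right Finset.sdiff_subset Finset.sdiff_disjoint
    have hdis2 : Disjoint I' (I \ I') := Finset.disjoint_sdiff
    have hdis3 : Disjoint (freeSet c \ I) I' :=
      Finset.disjoint_of_subset_right hI'I Finset.sdiff_disjoint
    have hu : (freeSet c \ I) ∪ (I \ I') = freeSet c \ I' :=
      Finset.sdiff_union_sdiff_cancel hIF hI'I
    have hI_eq : I' ∪ (I \ I') = I := Finset.union_sdiff_of_subset hI'I
    have e1 : shufExp I (freeSet c \ I) =
        shufExp I' (freeSet c \ I) + shufExp (I \ I') (freeSet c \ I) := by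
      rw [← shufExp_union_left (freeSet c \ I) hdis2, hI_eq]
    have e2 : shufExp I' (freeSet c \ I') = shufExp I' (freeSet c \ I) + shufExp I' (I \ I') := by
      rw [← hu]; exact shufExp_union_right _ hdis1
    have e3 : (freeSet c \ I') \ (I \ I') = freeSet c \ I := by
      rw [← hu]; exact Finset.union_sdiff_cancel_right hdis1
    have esign : shufExp I (freeSet c \ I) + shufExp I' (I \ I') =
        shufExp I' (freeSet c \ I') + shufExp (I \ I') ((freeSet c \ I') \ (I \ I')) := by
      rw [e2, e3, e1]; omega
    have f1 : setTo (setTo c (freeSet c \ I) false) (I \ I') false =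
        setTo c (freeSet c \ I') false := by rw [setTo_setTo_same, hu]
    have f2 : setTo (setTo c (freeSet c \ I) false) I' true =
        setTo (setTo c I' true) ((freeSet c \ I') \ (I \ I')) false := by
      rw [e3]; exact setTo_comm c hdis3 false true
    have f3 : setTo (setTo c I' true) (I \ I') true = setTo c I true := by
      rw [setTo_setTo_same, hI_eq]
    dsimp only
    rw [hFI, esign, f1, f2, f3]
end

/-- The Serre diagonal on the cellular chain complex of the
standard `n`-cube is strictly coassociative:
`(Δ ⊗ id) ∘ Δ = (id ⊗ Δ) ∘ Δ` as maps `Q_* → Q_* ⊗ Q_* ⊗ Q_*`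
(after identifying `(Q ⊗ Q) ⊗ Q` with `Q ⊗ (Q ⊗ Q)` by the associator). -/
theorem serreDiag_coassoc (n : ℕ) :
    (TensorProduct.assoc ℤ (Q n) (Q n) (Q n)).toLinearMap.comp
        ((TensorProduct.map (serreDiag n) LinearMap.id).comp (serreDiag n)) =
      (TensorProduct.map LinearMap.id (serreDiag n)).comp (serreDiag n) := by
  exact coassoc_aux n (serreDiag n) serreDiag_single
end

section
/- The Hirsch formula holds exactly on mod-2 simplicial cochains: for every simplicial set X and all a ∈ C^p(X), b ∈ C^q(X), c ∈ C^r(X), one has (a⌣b)⌣₁c = (a⌣₁c)⌣b + a⌣(b⌣₁c) in C^{p+q+r−1}(X) (coefficients in ℤ/2); that is, cup-one multiplication by c on the right is a derivation of the cup product. -/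
/-!
Mod-2 (non-normalized) simplicial cochains of a simplicial set, with the cup
product, Steenrod's cup-one product and related operations.

For a simplicial set `X`, a weakly increasing vertex map `f : [k] → [n]` and
`σ ∈ X_n`, the face `σ(f 0, …, f k) ∈ X_k` is obtained by applying `X` to the
corresponding monotone map.  `Ch X p = X_p → ℤ/2` is the group of mod-2
cochains of degree `p`; `ι` includes it into the total cochain group `TCh X`
(so that cochains whose degrees are given by different, but equal, numerical
expressions can be compared).
-/

open CategoryTheory Simplicial

/-- Mod-2 (non-normalized) simplicial cochains of degree `p`. -/
abbrev Ch (X : SSet) (p : ℕ) : Type _ := X _⦋p⦌ → ZMod 2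

/-- The total cochain group (all degrees at once). -/
abbrev TCh (X : SSet) : Type _ := ∀ n : ℕ, X _⦋n⦌ → ZMod 2

/-- The face `σ(f 0, …, f k)` of a simplex `σ ∈ X_n` along a monotone vertex
map `f : [k] → [n]`. -/
def face (X : SSet) {k n : ℕ} (f : Fin (k + 1) →o Fin (n + 1)) (σ : X _⦋n⦌) : X _⦋k⦌ :=
  X.map (SimplexCategory.mkHom f).op σ

/-- Helper building a monotone vertex map from a function on `ℕ`. -/
def mkVert {m n : ℕ} (f : ℕ → ℕ) (hb : ∀ l, l < m + 1 → f l < n + 1)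
    (hm : ∀ k l, k ≤ l → l < m + 1 → f k ≤ f l) : Fin (m + 1) →o Fin (n + 1) where
  toFun l := ⟨f l.1, hb l.1 l.isLt⟩
  monotone' k l h := by
    simpa [Fin.mk_le_mk] using hm k.1 l.1 (Fin.le_def.mp h) l.isLt

/-- Inclusion of degree-`p` cochains into the total cochain group. -/
def ι (X : SSet) (p : ℕ) (a : Ch X p) : TCh X := fun n =>
  if h : n = p then fun σ => a (cast (by rw [h]) σ) else 0

/-- The cup product `(a ⌣ b)(σ) = a(σ(0,…,p)) · b(σ(p,…,p+q))`. -/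
def cup (X : SSet) (p q : ℕ) (a : Ch X p) (b : Ch X q) : Ch X (p + q) :=
  fun σ =>
    a (face X (mkVert (m := p) (n := p + q) (fun l => l)
        (fun l hl => by beta_reduce; omega) (fun k l h _ => h)) σ) *
    b (face X (mkVert (m := q) (n := p + q) (fun l => p + l)
        (fun l hl => by beta_reduce; omega) (fun k l h _ => by beta_reduce; omega)) σ)

/-- Steenrod's cup-one product
`(a ⌣₁ b)(σ) = Σ_{i=0}^{p−1} a(σ(0,…,i,i+q,…,n)) · b(σ(i,…,i+q))`,
for `σ ∈ X_n`, `n = p + q − 1` (so `a ⌣₁ b = 0` when `p = 0`). -/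
def cup1 (X : SSet) (p q : ℕ) (a : Ch X p) (b : Ch X q) : Ch X (p + q - 1) :=
  fun σ => ∑ i : Fin p,
    a (face X (mkVert (m := p) (n := p + q - 1)
        (fun l => if l ≤ i.1 then l else l + q - 1)
        (fun l hl => by have := i.isLt; beta_reduce; split <;> omega)
        (fun k l h hl => by have := i.isLt; beta_reduce; split_ifs <;> omega)) σ) *
    b (face X (mkVert (m := q) (n := p + q - 1)
        (fun l => i.1 + l)
        (fun l hl => by have := i.isLt; beta_reduce; omega)
        (fun k l h _ => by beta_reduce; omega)) σ)

open CategoryTheory Simplicial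

lemma face_face (X : SSet) {j k n : ℕ} (f : Fin (j + 1) →o Fin (k + 1))
    (g : Fin (k + 1) →o Fin (n + 1)) (σ : X _⦋n⦌) :
    face X f (face X g σ) = face X (g.comp f) σ := by
  simp only [face]
  rw [← types_comp_apply (X.map _) (X.map _), ← X.map_comp, ← op_comp]
  congr 2

/-- `Fin.cast` as an order hom. -/
def finCastHom {m n : ℕ} (h : m = n) : Fin m →o Fin n :=
  ⟨Fin.cast h, fun _ _ hab => hab⟩

lemma face_cast (X : SSet) {k n m : ℕ} (h : n = m) (e : X _⦋n⦌ = X _⦋m⦌)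
    (f : Fin (k + 1) →o Fin (m + 1)) (σ : X _⦋n⦌) :
    face X f (cast e σ) = face X ((finCastHom (by rw [h])).comp f) σ := by
  subst h
  have : cast e σ = σ := by rw [cast_eq]
  rw [this]
  congr 1

lemma face_congr (X : SSet) {k n : ℕ} {f g : Fin (k + 1) →o Fin (n + 1)} (h : f = g)
    (σ : X _⦋n⦌) : face X f σ = face X g σ := by rw [h]

lemma ι_apply_pos (X : SSet) {m n : ℕ} (x : Ch X m) (h : n = m) (σ : X _⦋n⦌) :
    ι X m x n σ = x (cast (by rw [h]) σ) := by
  simp [ι, h]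

lemma ι_apply_neg (X : SSet) {m n : ℕ} (x : Ch X m) (h : ¬ n = m) (σ : X _⦋n⦌) :
    ι X m x n σ = 0 := by
  simp [ι, h]
lemma vert_ext {k n : ℕ} {F G : Fin k →o Fin n} (h : ∀ l : Fin k, (F l).1 = (G l).1) : F = G :=
  OrderHom.ext _ _ (funext fun l => Fin.ext (h l))

@[simp] lemma mkVert_coe {m n : ℕ} (f : ℕ → ℕ) (hb) (hm) (l : Fin (m + 1)) :
    ((mkVert (m := m) (n := n) f hb hm l : Fin (n + 1)) : ℕ) = f l.1 := rfl

@[simp] lemma finCastHom_coe {m n : ℕ} (h : m = n) (l : Fin m) :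
    ((finCastHom h l : Fin n) : ℕ) = l.1 := rfl

lemma cup1_eq_zero (X : SSet) {p r : ℕ} (hp : p = 0) (x : Ch X p) (y : Ch X r) :
    cup1 X p r x y = 0 := by subst hp; funext σ; simp [cup1]

lemma cup_zero_left (X : SSet) {p q : ℕ} (b : Ch X q) : cup X p q 0 b = 0 := by
  funext σ; simp [cup]

lemma cup_zero_right (X : SSet) {p q : ℕ} (a : Ch X p) : cup X p q a 0 = 0 := by
  funext σ; simp [cup]

lemma ι_zero (X : SSet) (m : ℕ) : ι X m 0 = 0 := by
  funext n σ; by_cases h : n = m <;> simp [ι, h]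
/-- The Hirsch formula holds exactly on mod-2 simplicial
cochains: `(a ⌣ b) ⌣₁ c = (a ⌣₁ c) ⌣ b + a ⌣ (b ⌣₁ c)` in `C^{p+q+r−1}(X)`;
that is, cup-one multiplication by `c` on the right is a derivation of the cup
product. -/
theorem hirsch_formula (X : SSet) (p q r : ℕ) (a : Ch X p) (b : Ch X q) (c : Ch X r) :
    ι X ((p + q) + r - 1) (cup1 X (p + q) r (cup X p q a b) c) =
      ι X ((p + r - 1) + q) (cup X (p + r - 1) q (cup1 X p r a c) b)
      + ι X (p + (q + r - 1)) (cup X p (q + r - 1) a (cup1 X q r b c)) := by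
  by_cases h0 : p = 0 ∧ q = 0
  · obtain ⟨hp, hq⟩ := h0
    rw [cup1_eq_zero X (show p + q = 0 by omega), cup1_eq_zero X hp a c, cup_zero_left,
      cup1_eq_zero X hq b c, cup_zero_right, ι_zero, ι_zero, ι_zero, add_zero]
  by_cases hpr0 : p = 0 ∧ r = 0
  · obtain ⟨hp, hr⟩ := hpr0
    subst hp; subst hr
    rw [cup1_eq_zero X rfl a c, cup_zero_left, ι_zero]
    have h2 : (0 + q) + 0 - 1 = 0 + (q + 0 - 1) := by omega
    funext n σ
    show _ = 0 + ι X _ _ n σ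
    simp only [zero_add]
    by_cases hn : n = (0 + q) + 0 - 1
    · subst hn
      rw [ι_apply_pos X _ rfl, ι_apply_pos X _ h2, cast_eq]
      simp only [cup1, cup]
      simp only [face_cast X h2, face_face]
      rw [Fin.sum_univ_add, Finset.mul_sum]
      simp only [Finset.univ_eq_empty, Finset.sum_empty, zero_add]
      refine Finset.sum_congr rfl fun j _ => ?_
      rw [mul_assoc]
      refine congrArg₂ (· * ·) ?_ (congrArg₂ (· * ·) ?_ ?_) <;>
        exact congrArg _ (face_congr X (vert_ext fun l => by
          have hj := j.isLt
          have hl := l.isLt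
          simp [mkVert, finCastHom, OrderHom.comp, DFunLike.coe] <;> ((try split_ifs) <;> omega)) σ)
    · rw [ι_apply_neg X _ hn, ι_apply_neg X _ (by omega)]
  by_cases hqr0 : q = 0 ∧ r = 0
  · obtain ⟨hq, hr⟩ := hqr0
    subst hq; subst hr
    rw [cup1_eq_zero X rfl b c, cup_zero_right, ι_zero]
    have h1 : (p + 0) + 0 - 1 = (p + 0 - 1) + 0 := by omega
    funext n σ
    show _ = ι X _ _ n σ + 0
    simp only [add_zero]
    by_cases hn : n = (p + 0) + 0 - 1
    · subst hn
      rw [ι_apply_pos X _ rfl, ι_apply_pos X _ h1, cast_eq]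
      simp only [cup1, cup]
      simp only [face_cast X h1, face_face]
      rw [Fin.sum_univ_add, Finset.sum_mul]
      simp only [Finset.univ_eq_empty, Finset.sum_empty, add_zero]
      refine Finset.sum_congr rfl fun i _ => ?_
      rw [mul_right_comm]
      refine congrArg₂ (· * ·) (congrArg₂ (· * ·) ?_ ?_) ?_ <;>
        exact congrArg _ (face_congr X (vert_ext fun l => by
          have hi := i.isLt
          have hl := l.isLt
          simp [mkVert, finCastHom, OrderHom.comp, DFunLike.coe] <;> ((try split_ifs) <;> omega)) σ)
    · rw [ι_apply_neg X _ hn, ι_apply_neg X _ (by omega)]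
  -- main case
  have hpr : 1 ≤ p + r := by omega
  have hqr : 1 ≤ q + r := by omega
  have h1 : (p + q) + r - 1 = (p + r - 1) + q := by omega
  have h2 : (p + q) + r - 1 = p + (q + r - 1) := by omega
  funext n σ
  show _ = ι X _ _ n σ + ι X _ _ n σ
  by_cases hn : n = (p + q) + r - 1
  · subst hn
    rw [ι_apply_pos X _ rfl, ι_apply_pos X _ h1, ι_apply_pos X _ h2, cast_eq]
    simp only [cup1, cup]
    simp only [face_cast X h1, face_cast X h2, face_face]
    rw [Fin.sum_univ_add, Finset.sum_mul, Finset.mul_sum]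
    refine congrArg₂ (· + ·) (Finset.sum_congr rfl fun i _ => ?_) (Finset.sum_congr rfl fun j _ => ?_)
    · rw [mul_right_comm]
      refine congrArg₂ (· * ·) (congrArg₂ (· * ·) ?_ ?_) ?_ <;>
        exact congrArg _ (face_congr X (vert_ext fun l => by
          have hi := i.isLt
          have hl := l.isLt
          simp [mkVert, finCastHom, OrderHom.comp, DFunLike.coe] <;> ((try split_ifs) <;> omega)) σ)
    · rw [mul_assoc]
      refine congrArg₂ (· * ·) ?_ (congrArg₂ (· * ·) ?_ ?_) <;>
        exact congrArg _ (face_congr X (vert_ext fun l => by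
          have hj := j.isLt
          have hl := l.isLt
          simp [mkVert, finCastHom, OrderHom.comp, DFunLike.coe] <;> ((try split_ifs) <;> omega)) σ)
  · rw [ι_apply_neg X _ hn, ι_apply_neg X _ (by omega), ι_apply_neg X _ (by omega), add_zero]
end
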